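/- arXiv:1512.05629 — 5 statements merged into one kernel-verified Lean document; each statement's English description precedes it below -/
import Mathlib

section
/- If D: I_M^L → [0,1] is a discrete copula, then the array A with entries a_{i₁…i_L} := M · (Δ_{i_L−1}^{i_L} ⋯ Δ_{i₁−1}^{i₁} D), the M-scaled L-fold difference of D over the unit lattice box with upper corner (i₁/M,…,i_L/M), is an L-dimensional stochastic array of order M, and D(i₁/M,…,i_L/M) = (1/M) Σ_{ν₁≤i₁} ⋯ Σ_{ν_L≤i_L} a_{ν₁…ν_L}. -/
open Finset

/-- The sign `(-1)^{#{ℓ : ε ℓ = false}}` appearing in `L`-fold first-order differences. -/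
def boxSign {L : ℕ} (ε : Fin L → Bool) : ℝ :=
  (-1 : ℝ) ^ (Finset.univ.filter (fun ℓ => ε ℓ = false)).card

/-- `D` is a discrete copula on `I_M^L`: the lattice point `(i₁/M, …, i_L/M)` is encoded
by an index vector `i : Fin L → ℕ` with `i ℓ ≤ M`.  The conditions are: values in `[0,1]`,
groundedness (D1), uniform margins (D2), and `L`-increasingness over unit lattice boxes (D3). -/
def IsDiscreteCopula (M L : ℕ) (D : (Fin L → ℕ) → ℝ) : Prop :=
  (∀ i : Fin L → ℕ, (∀ ℓ, i ℓ ≤ M) → D i ∈ Set.Icc (0 : ℝ) 1) ∧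
  (∀ i : Fin L → ℕ, (∀ ℓ, i ℓ ≤ M) → (∃ ℓ, i ℓ = 0) → D i = 0) ∧
  (∀ ℓ : Fin L, ∀ k : ℕ, k ≤ M →
    D (fun l => if l = ℓ then k else M) = (k : ℝ) / M) ∧
  (∀ i : Fin L → ℕ, (∀ ℓ, 1 ≤ i ℓ ∧ i ℓ ≤ M) →
    0 ≤ ∑ ε : Fin L → Bool,
        boxSign ε * D (fun ℓ => if ε ℓ then i ℓ else i ℓ - 1))

/-- An `L`-dimensional stochastic array of order `M`: nonnegative entries (indexed by
`ν : Fin L → Fin M`, where `ν ℓ` encodes the index `ν ℓ + 1 ∈ {1,…,M}`), and every line sum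
(fixing one index and summing over the others) equals `1`. -/
def IsStochasticArray (M L : ℕ) (A : (Fin L → Fin M) → ℝ) : Prop :=
  (∀ ν, 0 ≤ A ν) ∧
  (∀ ℓ : Fin L, ∀ j : Fin M,
    ∑ ν : Fin L → Fin M, (if ν ℓ = j then A ν else 0) = 1)

/-- A permutation array: a stochastic array all of whose entries lie in `{0, 1}`. -/
def IsPermutationArray (M L : ℕ) (A : (Fin L → Fin M) → ℝ) : Prop :=
  IsStochasticArray M L A ∧ ∀ ν, A ν = 0 ∨ A ν = 1

/-- The normalized cumulative sum `(1/M) Σ_{ν₁ ≤ i₁} ⋯ Σ_{ν_L ≤ i_L} a_{ν₁…ν_L}`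
(with `ν ℓ + 1 ≤ i ℓ` in the `Fin M` encoding; empty sums are zero). -/
noncomputable def cumSum (M L : ℕ) (A : (Fin L → Fin M) → ℝ) (i : Fin L → ℕ) : ℝ :=
  (1 / (M : ℝ)) * ∑ ν : Fin L → Fin M, (if ∀ ℓ, (ν ℓ : ℕ) < i ℓ then A ν else 0)

/-!
Summing the unit-box differences of `D` over all boxes below a lattice point `i` telescopes,
one coordinate at a time, to the difference of `D` over the box `[0, i]`; groundedness kills
every corner of that box except `i`, so `D` is the normalised cumulative sum of `A`.
Nonnegativity of `A` is `L`-increasingness, and the line sum through level `j` is `M` times the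
difference of the cumulative sums at two adjacent marginal points, i.e. `M ((j+1)/M - j/M) = 1`.
-/
lemma boxSign_eq_prod {L : ℕ} (ε : Fin L → Bool) :
    boxSign ε = ∏ ℓ, (if ε ℓ then 1 else -1 : ℝ) := by
  rw [boxSign, ← prod_const, prod_filter]
  exact prod_congr rfl fun ℓ _ => by cases ε ℓ <;> simp

lemma boxSign_cons {n : ℕ} (b : Bool) (e : Fin n → Bool) :
    boxSign (Fin.cons b e : Fin (n + 1) → Bool) = (if b then 1 else -1) * boxSign e := by
  simp only [boxSign_eq_prod, Fin.prod_univ_succ, Fin.cons_zero, Fin.cons_succ]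

lemma sum_pi_fin_succ {n : ℕ} {X : Type*} [Fintype X] (f : (Fin (n + 1) → X) → ℝ) :
    ∑ x, f x = ∑ a, ∑ g : Fin n → X, f (Fin.cons a g) := by
  rw [← Fintype.sum_prod_type']
  exact (Fintype.sum_equiv (Fin.consEquiv fun _ => X) _ _ fun _ => rfl).symm

lemma sum_piFinset_fin_succ {n : ℕ} {X : Type*} [DecidableEq X] (S : Fin (n + 1) → Finset X)
    (f : (Fin (n + 1) → X) → ℝ) :
    ∑ x ∈ Fintype.piFinset S, f x =
      ∑ a ∈ S 0, ∑ g ∈ Fintype.piFinset (Fin.tail S), f (Fin.cons a g) := by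
  have h := filter_piFinset_eq_map_consEquiv S fun _ => True
  simp only [Finset.filter_true] at h
  rw [h, sum_map, sum_product]
  rfl

def boxDiff {L : ℕ} (F : (Fin L → ℕ) → ℝ) (u v : Fin L → ℕ) : ℝ :=
  ∑ ε : Fin L → Bool, boxSign ε * F (fun ℓ => if ε ℓ then u ℓ else v ℓ)

lemma boxDiff_cons {n : ℕ} (F : (Fin (n + 1) → ℕ) → ℝ) (a b : ℕ) (u v : Fin n → ℕ) :
    boxDiff F (Fin.cons a u) (Fin.cons b v) =
      boxDiff (fun x => F (Fin.cons a x)) u v - boxDiff (fun x => F (Fin.cons b x)) u v := by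
  have hpoint : ∀ c e, (fun ℓ => if (Fin.cons c e : Fin (n + 1) → Bool) ℓ then
      (Fin.cons a u : Fin (n + 1) → ℕ) ℓ else (Fin.cons b v : Fin (n + 1) → ℕ) ℓ) =
        Fin.cons (if c then a else b) (fun ℓ => if e ℓ then u ℓ else v ℓ) := by
    intro c e
    ext ℓ
    cases ℓ using Fin.cases <;> rfl
  simp [boxDiff, sum_pi_fin_succ, boxSign_cons, hpoint, sub_eq_add_neg]

theorem sum_boxDiff_piFinset_range {L : ℕ} (F : (Fin L → ℕ) → ℝ) (i : Fin L → ℕ) :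
    ∑ ν ∈ Fintype.piFinset fun ℓ => range (i ℓ), boxDiff F (ν + 1) ν = boxDiff F i 0 := by
  induction L with
  | zero => simp [boxDiff, Subsingleton.elim _ i]
  | succ n ih =>
    have hcons : ∀ (a : ℕ) g, boxDiff F (Fin.cons a g + 1) (Fin.cons a g) =
        boxDiff (fun x => F (Fin.cons (a + 1) x)) (g + 1) g -
          boxDiff (fun x => F (Fin.cons a x)) (g + 1) g := by
      intro a g
      rw [← boxDiff_cons]
      congr
      ext ℓ
      cases ℓ using Fin.cases <;> simp
    have hinner : ∀ k, ∑ g ∈ Fintype.piFinset (Fin.tail fun ℓ => range (i ℓ)),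
        boxDiff (fun x => F (Fin.cons k x)) (g + 1) g =
          boxDiff (fun x => F (Fin.cons k x)) (Fin.tail i) 0 :=
      fun k => ih _ (Fin.tail i)
    rw [sum_piFinset_fin_succ]
    simp_rw [hcons, sum_sub_distrib, hinner]
    rw [← sum_sub_distrib,
      sum_range_sub (fun k => boxDiff (fun x => F (Fin.cons k x)) (Fin.tail i) 0),
      ← boxDiff_cons, Fin.cons_self_tail]
    exact congrArg _ Matrix.cons_zero_zero

lemma boxDiff_zero_of_grounded {L : ℕ} {F : (Fin L → ℕ) → ℝ} {u : Fin L → ℕ}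
    (hF : ∀ x ≤ u, (∃ ℓ, x ℓ = 0) → F x = 0) : boxDiff F u 0 = F u := by
  rw [boxDiff, sum_eq_single (fun _ => true)]
  · simp [boxSign]
  · intro ε _ hε
    obtain ⟨ℓ, hℓ⟩ : ∃ ℓ, ε ℓ = false := by
      by_contra! h
      exact hε (funext fun ℓ => by simpa using h ℓ)
    rw [hF _ (fun l => by split_ifs <;> simp) ⟨ℓ, by simp [hℓ]⟩, mul_zero]
  · simp

lemma sum_ite_forall_lt_eq_sum_piFinset {L M : ℕ} (f : (Fin L → ℕ) → ℝ) {i : Fin L → ℕ}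
    (hi : ∀ ℓ, i ℓ ≤ M) :
    ∑ ν : Fin L → Fin M, (if ∀ ℓ, (ν ℓ : ℕ) < i ℓ then f (fun ℓ => ν ℓ) else 0) =
      ∑ ν ∈ Fintype.piFinset fun ℓ => range (i ℓ), f ν := by
  rw [← sum_filter]
  refine sum_bij (fun ν _ ℓ => ν ℓ) (fun ν hν => ?_) (fun ν _ μ _ h => ?_) (fun x hx => ?_)
    (fun _ _ => rfl)
  · simpa using hν
  · exact funext fun ℓ => Fin.ext (congrFun h ℓ)
  · rw [Fintype.mem_piFinset] at hx
    exact ⟨fun ℓ => ⟨x ℓ, (mem_range.1 (hx ℓ)).trans_le (hi ℓ)⟩, by simpa using hx, rfl⟩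

lemma cumSum_eq_of_grounded {M L : ℕ} (hM : 0 < M) {D : (Fin L → ℕ) → ℝ}
    (hground : ∀ i : Fin L → ℕ, (∀ ℓ, i ℓ ≤ M) → (∃ ℓ, i ℓ = 0) → D i = 0)
    {A : (Fin L → Fin M) → ℝ}
    (hA : ∀ ν : Fin L → Fin M, A ν = M * boxDiff D ((fun ℓ => (ν ℓ : ℕ)) + 1) fun ℓ => ν ℓ)
    {i : Fin L → ℕ} (hi : ∀ ℓ, i ℓ ≤ M) :
    cumSum M L A i = D i := by
  have hgr : ∀ x ≤ i, (∃ ℓ, x ℓ = 0) → D x = 0 :=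
    fun x hx => hground x fun ℓ => (hx ℓ).trans (hi ℓ)
  simp_rw [cumSum, hA, ← mul_ite_zero, ← mul_sum,
    sum_ite_forall_lt_eq_sum_piFinset (fun ν => boxDiff D (ν + 1) ν) hi,
    sum_boxDiff_piFinset_range, boxDiff_zero_of_grounded hgr]
  field_simp

lemma sum_ite_eq_eq_mul_sub_cumSum {M L : ℕ} (hM : 0 < M) (A : (Fin L → Fin M) → ℝ)
    (ℓ : Fin L) (j : Fin M) :
    ∑ ν : Fin L → Fin M, (if ν ℓ = j then A ν else 0) =
      M * (cumSum M L A (fun l => if l = ℓ then j + 1 else M) -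
        cumSum M L A (fun l => if l = ℓ then j else M)) := by
  have hslab : ∀ (ν : Fin L → Fin M) (k : ℕ),
      (∀ l, (ν l : ℕ) < if l = ℓ then k else M) ↔ (ν ℓ : ℕ) < k := by
    refine fun ν k => ⟨fun h => by simpa using h ℓ, fun h l => ?_⟩
    split_ifs with hl
    · exact hl ▸ h
    · exact (ν l).isLt
  have hM' : (M : ℝ) ≠ 0 := by positivity
  rw [cumSum, cumSum, ← mul_sub, ← mul_assoc, mul_one_div_cancel hM', one_mul, ← sum_sub_distrib]
  refine sum_congr rfl fun ν _ => ?_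
  simp only [hslab]
  simp only [Fin.ext_iff]
  split_ifs <;> first | (exfalso; omega) | simp only [sub_zero, sub_self]

theorem discreteCopula_gives_stochasticArray_general (M L : ℕ) (hM : 0 < M)
    (D : (Fin L → ℕ) → ℝ) (hD : IsDiscreteCopula M L D)
    (A : (Fin L → Fin M) → ℝ)
    (hA : ∀ ν : Fin L → Fin M,
      A ν = (M : ℝ) * ∑ ε : Fin L → Bool,
        boxSign ε * D (fun ℓ => if ε ℓ then (ν ℓ : ℕ) + 1 else (ν ℓ : ℕ))) :
    IsStochasticArray M L A ∧
      ∀ i : Fin L → ℕ, (∀ ℓ, i ℓ ≤ M) → D i = cumSum M L A i := by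
  obtain ⟨-, hground, hmargin, hincr⟩ := hD
  have hcum (i : Fin L → ℕ) (hi : ∀ ℓ, i ℓ ≤ M) : D i = cumSum M L A i :=
    (cumSum_eq_of_grounded hM hground hA hi).symm
  refine ⟨⟨fun ν => ?_, fun ℓ j => ?_⟩, hcum⟩
  · rw [hA]
    exact mul_nonneg M.cast_nonneg
      (by simpa using hincr (fun ℓ => ν ℓ + 1) fun ℓ => ⟨le_add_self, (ν ℓ).isLt⟩)
  · have hj := j.isLt
    rw [sum_ite_eq_eq_mul_sub_cumSum hM, ← hcum, ← hcum, hmargin ℓ _ hj, hmargin ℓ _ hj.le]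
    · field_simp
      push_cast
      ring
    all_goals intro l; split_ifs <;> omega

/-- if `D` is a discrete copula, the array of `M`-scaled `L`-fold differences
of `D` over unit lattice boxes is a stochastic array, and `D` is its cumulative sum. -/
theorem discreteCopula_gives_stochasticArray (M L : ℕ) (hM : 0 < M) (hL : 2 ≤ L)
    (D : (Fin L → ℕ) → ℝ) (hD : IsDiscreteCopula M L D)
    (A : (Fin L → Fin M) → ℝ)
    (hA : ∀ ν : Fin L → Fin M,
      A ν = (M : ℝ) * ∑ ε : Fin L → Bool,
        boxSign ε * D (fun ℓ => if ε ℓ then (ν ℓ : ℕ) + 1 else (ν ℓ : ℕ))) :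
    IsStochasticArray M L A ∧
      ∀ i : Fin L → ℕ, (∀ ℓ, i ℓ ≤ M) → D i = cumSum M L A i :=
  discreteCopula_gives_stochasticArray_general M L hM D hD A hA
end

section
/- The empirical copula defined from a tie-free set S of M points in ℝ^L corresponds, under the stochastic-array characterization, to the L-dimensional permutation array A with a_{i₁…i_L} = 1 if the point (x_{(i₁)}^1, …, x_{(i_L)}^L) of coordinate-wise order statistics lies in S, and 0 otherwise. -/
open Finset

/-- the empirical copula of a tie-free `M`-point set corresponds, under the
stochastic-array characterization, to the permutation array with entry `1` at `(ν₁,…,ν_L)`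
iff the point of coordinatewise order statistics `(x_{(ν₁)}^1,…,x_{(ν_L)}^L)` lies in the
set, i.e. iff some point `m` has `rank(x_m^ℓ) = ν_ℓ` for all `ℓ`. -/
theorem empirical_copula_corresponds_to_permutationArray (M L : ℕ) (hM : 0 < M) (hL : 2 ≤ L)
    (x : Fin M → Fin L → ℝ)
    (hx : ∀ ℓ : Fin L, Function.Injective (fun m => x m ℓ))
    (A : (Fin L → Fin M) → ℝ)
    (hA : ∀ ν : Fin L → Fin M,
      A ν = if ∃ m : Fin M, ∀ ℓ,
          (Finset.univ.filter (fun μ : Fin M => x μ ℓ ≤ x m ℓ)).card = (ν ℓ : ℕ) + 1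
        then 1 else 0) :
    IsPermutationArray M L A ∧
      ∀ i : Fin L → ℕ, (∀ ℓ, i ℓ ≤ M) →
        ((Finset.univ.filter (fun m : Fin M =>
            ∀ ℓ, (Finset.univ.filter (fun μ : Fin M => x μ ℓ ≤ x m ℓ)).card ≤ i ℓ)).card : ℝ)
          / M = cumSum M L A i := by
  classical
  -- the rank function
  set ρ : Fin L → Fin M → ℕ :=
    fun ℓ m => (Finset.univ.filter (fun μ : Fin M => x μ ℓ ≤ x m ℓ)).card with hρdef
  have hρeq : ∀ (ℓ : Fin L) (m : Fin M),
      (Finset.univ.filter (fun μ : Fin M => x μ ℓ ≤ x m ℓ)).card = ρ ℓ m := fun _ _ => rfl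
  have hρ1 : ∀ ℓ m, 1 ≤ ρ ℓ m := by
    intro ℓ m
    exact Finset.card_pos.2 ⟨m, by simp⟩
  have hρM : ∀ ℓ m, ρ ℓ m ≤ M := by
    intro ℓ m
    simpa using Finset.card_filter_le (Finset.univ : Finset (Fin M))
      (fun μ : Fin M => x μ ℓ ≤ x m ℓ)
  have hmono : ∀ (ℓ : Fin L) (m m' : Fin M), x m' ℓ < x m ℓ → ρ ℓ m' < ρ ℓ m := by
    intro ℓ m m' h
    apply Finset.card_lt_card
    constructor
    · intro μ hμ
      simp only [Finset.mem_filter, Finset.mem_univ, true_and] at hμ ⊢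
      exact hμ.trans h.le
    · intro hsub
      have hm : m ∈ Finset.univ.filter (fun μ : Fin M => x μ ℓ ≤ x m ℓ) := by simp
      have := hsub hm
      simp only [Finset.mem_filter, Finset.mem_univ, true_and] at this
      exact absurd h (not_lt.2 this)
  have hρinj : ∀ ℓ : Fin L, ∀ m m' : Fin M, ρ ℓ m = ρ ℓ m' → m = m' := by
    intro ℓ m m' h
    apply hx ℓ
    show x m ℓ = x m' ℓ
    rcases lt_trichotomy (x m ℓ) (x m' ℓ) with hlt | heq | hgt
    · have := hmono ℓ m' m hlt; omega
    · exact heq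
    · have := hmono ℓ m m' hgt; omega
  have hRlt : ∀ (ℓ : Fin L) (m : Fin M), ρ ℓ m - 1 < M := by
    intro ℓ m; have := hρ1 ℓ m; have := hρM ℓ m; omega
  set R : Fin M → Fin L → Fin M := fun m ℓ => ⟨ρ ℓ m - 1, hRlt ℓ m⟩ with hRdef
  have hRρ : ∀ (m : Fin M) (ℓ : Fin L), (R m ℓ : ℕ) + 1 = ρ ℓ m := by
    intro m ℓ
    show ρ ℓ m - 1 + 1 = ρ ℓ m
    have := hρ1 ℓ m; omega
  have hRinj : Function.Injective R := by
    intro m m' h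
    have hl0 : (0 : ℕ) < L := by omega
    have h0 := congrFun h ⟨0, hl0⟩
    have : ρ ⟨0, hl0⟩ m = ρ ⟨0, hl0⟩ m' := by
      have := hRρ m ⟨0, hl0⟩; have := hRρ m' ⟨0, hl0⟩
      have hv : (R m ⟨0, hl0⟩ : ℕ) = (R m' ⟨0, hl0⟩ : ℕ) := by rw [h0]
      omega
    exact hρinj _ m m' this
  have hA' : ∀ ν, A ν = if ∃ m, R m = ν then 1 else 0 := by
    intro ν
    rw [hA ν]
    refine if_congr ?_ rfl rfl
    simp only [hρeq]
    constructor
    · rintro ⟨m, hm⟩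
      refine ⟨m, funext fun ℓ => Fin.ext ?_⟩
      have := hRρ m ℓ; have := hm ℓ; omega
    · rintro ⟨m, hm⟩
      refine ⟨m, fun ℓ => ?_⟩
      have h1 := hRρ m ℓ
      rw [hm] at h1
      omega
  have hbij : ∀ ℓ : Fin L, Function.Bijective (fun m => R m ℓ) := by
    intro ℓ
    refine Finite.injective_iff_bijective.1 ?_
    intro m m' h
    simp only at h
    have : ρ ℓ m = ρ ℓ m' := by
      have := hRρ m ℓ; have := hRρ m' ℓ
      have hv : (R m ℓ : ℕ) = (R m' ℓ : ℕ) := by rw [h]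
      omega
    exact hρinj ℓ m m' this
  -- a general reduction: sums of `if P ν then A ν else 0` over all ν reduce to sums over m
  have hsum : ∀ P : (Fin L → Fin M) → Prop, ∀ _ : DecidablePred P,
      ∑ ν : Fin L → Fin M, (if P ν then A ν else 0)
        = ∑ m : Fin M, (if P (R m) then (1 : ℝ) else 0) := by
    intro P _
    have h1 : ∑ ν : Fin L → Fin M, (if P ν then A ν else 0)
        = ∑ ν ∈ Finset.univ.image R, (if P ν then A ν else 0) := by
      symm
      apply Finset.sum_subset (Finset.subset_univ _)
      intro ν _ hν
      have hA0 : A ν = 0 := by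
        rw [hA' ν, if_neg]
        rintro ⟨m, hm⟩
        exact hν (Finset.mem_image.2 ⟨m, Finset.mem_univ m, hm⟩)
      simp [hA0]
    rw [h1, Finset.sum_image (fun m _ m' _ h => hRinj h)]
    refine Finset.sum_congr rfl fun m _ => ?_
    have : A (R m) = 1 := by rw [hA' (R m)]; exact if_pos ⟨m, rfl⟩
    rw [this]
  refine ⟨⟨⟨?_, ?_⟩, ?_⟩, ?_⟩
  · intro ν
    rw [hA' ν]
    split <;> norm_num
  · intro ℓ j
    calc (∑ ν : Fin L → Fin M, if ν ℓ = j then A ν else 0)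
        = ∑ m : Fin M, if R m ℓ = j then (1 : ℝ) else 0 := hsum _ _
      _ = 1 := ?_
    rw [Fintype.sum_bijective (fun m => R m ℓ) (hbij ℓ)
      (fun m => if R m ℓ = j then (1 : ℝ) else 0)
      (fun j' => if j' = j then (1 : ℝ) else 0) (fun m => rfl)]
    simp
  · intro ν
    rw [hA' ν]
    split
    · right; rfl
    · left; rfl
  · intro i _
    unfold cumSum
    have hs : (∑ ν : Fin L → Fin M, if ∀ ℓ, (ν ℓ : ℕ) < i ℓ then A ν else 0)
        = ∑ m : Fin M, if ∀ ℓ, ((R m) ℓ : ℕ) < i ℓ then (1 : ℝ) else 0 := hsum _ _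
    rw [hs]
    have hcond : ∀ m : Fin M, (∀ ℓ, ((R m) ℓ : ℕ) < i ℓ) ↔ ∀ ℓ, ρ ℓ m ≤ i ℓ := by
      intro m
      constructor <;> intro h ℓ <;> have := hRρ m ℓ <;> have := h ℓ <;> omega
    have hcount : ∑ m : Fin M, (if ∀ ℓ, ((R m) ℓ : ℕ) < i ℓ then (1 : ℝ) else 0)
        = ((Finset.univ.filter (fun m : Fin M => ∀ ℓ, ρ ℓ m ≤ i ℓ)).card : ℝ) := by
      rw [Finset.card_filter]
      push_cast
      refine Finset.sum_congr rfl fun m _ => ?_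
      simp [hcond m]
    rw [hcount]
    simp only [hρeq]
    rw [div_eq_mul_inv, mul_comm, one_div]
end

section
/- Conversely, every irreducible discrete copula D on I_M^L is the empirical copula of some set S ⊂ ℝ^L of M points without ties: if A is the permutation array associated to D and x_1^ℓ < ⋯ < x_M^ℓ are arbitrary strictly increasing reals for each ℓ, then D is the empirical copula of S := {(x_{i₁}^1,…,x_{i_L}^L) : a_{i₁…i_L} = 1}. -/
open Finset

/-- An irreducible discrete copula: a discrete copula whose range on the lattice is exactly
`I_M = {0, 1/M, …, 1}`. -/
def IsIrreducibleDiscreteCopula (M L : ℕ) (D : (Fin L → ℕ) → ℝ) : Prop :=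
  IsDiscreteCopula M L D ∧
  (∀ i : Fin L → ℕ, (∀ ℓ, i ℓ ≤ M) → ∃ k ≤ M, D i = (k : ℝ) / M) ∧
  (∀ k : ℕ, k ≤ M → ∃ i : Fin L → ℕ, (∀ ℓ, i ℓ ≤ M) ∧ D i = (k : ℝ) / M)

/-- every irreducible discrete copula is the empirical copula of a tie-free
`M`-point set: with `A` the associated permutation array and `x ℓ` arbitrary strictly
increasing reals in each coordinate, `D` is the empirical copula of
`S = {(x_{i₁}^1,…,x_{i_L}^L) : a_{i₁…i_L} = 1}`. -/
theorem irreducibleDiscreteCopula_is_empirical (M L : ℕ) (hM : 0 < M) (hL : 2 ≤ L)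
    (D : (Fin L → ℕ) → ℝ) (hD : IsIrreducibleDiscreteCopula M L D)
    (A : (Fin L → Fin M) → ℝ) (hAperm : IsPermutationArray M L A)
    (hDA : ∀ i : Fin L → ℕ, (∀ ℓ, i ℓ ≤ M) → D i = cumSum M L A i)
    (x : Fin L → Fin M → ℝ) (hx : ∀ ℓ, StrictMono (x ℓ))
    (S : Finset (Fin L → ℝ))
    (hS : S = (Finset.univ.filter (fun ν : Fin L → Fin M => A ν = 1)).image
      (fun ν ℓ => x ℓ (ν ℓ))) :
    ∀ i : Fin L → ℕ, (∀ ℓ, i ℓ ≤ M) →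
      D i = ((S.filter (fun p : Fin L → ℝ =>
          ∀ ℓ, (S.filter (fun q : Fin L → ℝ => q ℓ ≤ p ℓ)).card ≤ i ℓ)).card : ℝ) / M := by
  intro i hi
  classical
  set P : Finset (Fin L → Fin M) := Finset.univ.filter (fun ν => A ν = 1) with hP
  set f : (Fin L → Fin M) → (Fin L → ℝ) := fun ν ℓ => x ℓ (ν ℓ) with hf
  have hA01 := hAperm.2
  have hfinj : Function.Injective f := by
    intro ν μ h
    funext ℓ
    exact (hx ℓ).injective (congrFun h ℓ)
  -- each line of the permutation array contains exactly one 1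
  have huniq : ∀ (ℓ : Fin L) (j : Fin M), (P.filter (fun ν => ν ℓ = j)).card = 1 := by
    intro ℓ j
    have hline := hAperm.1.2 ℓ j
    have h1 : ∑ ν : Fin L → Fin M, (if ν ℓ = j then A ν else 0)
        = ∑ ν : Fin L → Fin M, (if A ν = 1 ∧ ν ℓ = j then (1 : ℝ) else 0) := by
      refine Finset.sum_congr rfl fun ν _ => ?_
      rcases hA01 ν with h | h <;> by_cases hj : ν ℓ = j <;> simp [h, hj]
    rw [h1, Finset.sum_boole] at hline
    have : ((P.filter (fun ν => ν ℓ = j)).card : ℝ) = 1 := by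
      rw [hP, Finset.filter_filter]
      exact hline
    exact_mod_cast this
  -- counting lemma: number of μ ∈ P with μ ℓ ≤ c is c + 1
  have hcount : ∀ (ℓ : Fin L) (c : Fin M),
      (P.filter (fun μ => μ ℓ ≤ c)).card = (c : ℕ) + 1 := by
    intro ℓ c
    have hmap : ∀ μ ∈ P.filter (fun μ => μ ℓ ≤ c), μ ℓ ∈ Finset.Iic c := by
      intro μ hμ
      simp only [Finset.mem_filter] at hμ
      simpa using hμ.2
    rw [Finset.card_eq_sum_card_fiberwise hmap]
    have hfib : ∀ j ∈ Finset.Iic c,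
        ((P.filter (fun μ => μ ℓ ≤ c)).filter (fun μ => μ ℓ = j)).card = 1 := by
      intro j hj
      rw [Finset.filter_filter]
      have heq : (P.filter fun μ => μ ℓ ≤ c ∧ μ ℓ = j) = P.filter (fun μ => μ ℓ = j) := by
        refine Finset.filter_congr fun μ _ => ?_
        simp only [Finset.mem_Iic] at hj
        exact ⟨fun h => h.2, fun h => ⟨h ▸ hj, h⟩⟩
      rw [heq, huniq]
    rw [Finset.sum_congr rfl hfib]
    simp [Fin.card_Iic]
  -- transfer of filters along the image
  have hS' : S = P.image f := hS
  have hfilter : ∀ (Q : (Fin L → ℝ) → Prop) (inst : DecidablePred Q),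
      (@Finset.filter _ Q inst S).card = (P.filter (fun ν => Q (f ν))).card := by
    intro Q inst
    rw [hS', Finset.filter_image, Finset.card_image_of_injective _ hfinj]
  -- rank computation
  have hrank : ∀ (ℓ : Fin L) (ν : Fin L → Fin M) (inst : DecidablePred (fun q : Fin L → ℝ => q ℓ ≤ f ν ℓ)),
      (@Finset.filter _ (fun q => q ℓ ≤ f ν ℓ) inst S).card = (ν ℓ : ℕ) + 1 := by
    intro ℓ ν inst
    rw [hfilter _ inst]
    have heq : (P.filter fun μ => f μ ℓ ≤ f ν ℓ) = P.filter (fun μ => μ ℓ ≤ ν ℓ) := by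
      refine Finset.filter_congr fun μ _ => ?_
      simp [hf, (hx ℓ).le_iff_le]
    rw [heq]
    exact hcount ℓ (ν ℓ)
  -- main computation
  rw [hDA i hi]
  unfold cumSum
  have hsum : ∑ ν : Fin L → Fin M, (if ∀ ℓ, (ν ℓ : ℕ) < i ℓ then A ν else 0)
      = ((P.filter (fun ν => ∀ ℓ, (ν ℓ : ℕ) < i ℓ)).card : ℝ) := by
    rw [hP, Finset.filter_filter, ← Finset.sum_boole]
    refine Finset.sum_congr rfl fun ν _ => ?_
    rcases hA01 ν with h | h <;> by_cases hc : ∀ ℓ, (ν ℓ : ℕ) < i ℓ <;> simp [h, hc]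
  rw [hsum]
  have hright : (S.filter (fun p : Fin L → ℝ =>
        ∀ ℓ, (S.filter (fun q : Fin L → ℝ => q ℓ ≤ p ℓ)).card ≤ i ℓ)).card
      = (P.filter (fun ν => ∀ ℓ, (ν ℓ : ℕ) < i ℓ)).card := by
    rw [hfilter _ _]
    congr 1
    refine Finset.filter_congr fun ν _ => ?_
    constructor
    · intro h ℓ
      have := h ℓ
      rw [hrank ℓ ν _] at this
      omega
    · intro h ℓ
      rw [hrank ℓ ν _]
      exact h ℓ
  rw [hright]
  ring
end

section
/- Discrete Sklar, part 1: if F₁,…,F_L are univariate CDFs on ℝ̄ with Ran(F_ℓ) ⊆ I_M for all ℓ, and D is a discrete copula on I_M^L, then H(y₁,…,y_L) := D(F₁(y₁),…,F_L(y_L)) is an L-dimensional CDF with Ran(H) ⊆ [0,1] whose ℓ-th marginal H(∞,…,∞,y_ℓ,∞,…,∞) equals F_ℓ(y_ℓ). -/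
open Finset

/-- `D` is a discrete copula on `I_M^L ⊆ [0,1]^L` (real-valued coordinates): values in
`[0,1]` on the lattice, groundedness (D1), uniform margins (D2), and `L`-increasingness
over unit lattice boxes (D3). -/
def IsDiscreteCopulaR (M L : ℕ) (D : (Fin L → ℝ) → ℝ) : Prop :=
  (∀ i : Fin L → ℕ, (∀ ℓ, i ℓ ≤ M) →
    D (fun ℓ => (i ℓ : ℝ) / M) ∈ Set.Icc (0 : ℝ) 1) ∧
  (∀ i : Fin L → ℕ, (∀ ℓ, i ℓ ≤ M) → (∃ ℓ, i ℓ = 0) →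
    D (fun ℓ => (i ℓ : ℝ) / M) = 0) ∧
  (∀ ℓ : Fin L, ∀ k : ℕ, k ≤ M →
    D (fun l => if l = ℓ then (k : ℝ) / M else 1) = (k : ℝ) / M) ∧
  (∀ i : Fin L → ℕ, (∀ ℓ, 1 ≤ i ℓ ∧ i ℓ ≤ M) →
    0 ≤ ∑ ε : Fin L → Bool,
        boxSign ε * D (fun ℓ => if ε ℓ then (i ℓ : ℝ) / M else ((i ℓ - 1 : ℕ) : ℝ) / M))

/-- An irreducible discrete copula (real-valued coordinates): range on the lattice is
exactly `I_M`. -/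
def IsIrreducibleDiscreteCopulaR (M L : ℕ) (D : (Fin L → ℝ) → ℝ) : Prop :=
  IsDiscreteCopulaR M L D ∧
  (∀ i : Fin L → ℕ, (∀ ℓ, i ℓ ≤ M) → ∃ k ≤ M, D (fun ℓ => (i ℓ : ℝ) / M) = (k : ℝ) / M) ∧
  (∀ k : ℕ, k ≤ M →
    ∃ i : Fin L → ℕ, (∀ ℓ, i ℓ ≤ M) ∧ D (fun ℓ => (i ℓ : ℝ) / M) = (k : ℝ) / M)

/-- A univariate CDF on `ℝ̄ = ℝ ∪ {−∞, ∞}` (encoded as `EReal`): nondecreasing,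
right-continuous, with value `0` at `−∞` and `1` at `∞`. -/
def IsCDF (F : EReal → ℝ) : Prop :=
  Monotone F ∧ (∀ y : EReal, ContinuousWithinAt F (Set.Ici y) y) ∧ F ⊥ = 0 ∧ F ⊤ = 1

/-- An `L`-dimensional CDF on `ℝ̄^L`: grounded (zero if any argument is `−∞`), value `1`
at `(∞,…,∞)`, and `L`-increasing (nonnegative rectangle volumes). -/
def IsMvCDF (L : ℕ) (H : (Fin L → EReal) → ℝ) : Prop :=
  (∀ y : Fin L → EReal, (∃ ℓ, y ℓ = ⊥) → H y = 0) ∧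
  H (fun _ => ⊤) = 1 ∧
  (∀ y z : Fin L → EReal, (∀ ℓ, y ℓ ≤ z ℓ) →
    0 ≤ ∑ ε : Fin L → Bool,
        boxSign ε * H (fun ℓ => if ε ℓ then z ℓ else y ℓ))


section aux
variable {L : ℕ}

def flipAt (j : Fin L) (ε : Fin L → Bool) : Fin L → Bool := Function.update ε j (!(ε j))

lemma flipAt_apply_ne (j : Fin L) (ε : Fin L → Bool) {l : Fin L} (hl : l ≠ j) :
    flipAt j ε l = ε l := Function.update_of_ne hl _ _

lemma flipAt_apply_self (j : Fin L) (ε : Fin L → Bool) : flipAt j ε j = !(ε j) :=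
  Function.update_self _ _ _

lemma flipAt_invol (j : Fin L) : Function.Involutive (flipAt j) := by
  intro ε; funext l
  by_cases hl : l = j
  · subst hl; simp [flipAt]
  · simp [flipAt_apply_ne j _ hl, flipAt, Function.update_of_ne hl]

lemma boxSign_flipAt (j : Fin L) (ε : Fin L → Bool) :
    boxSign (flipAt j ε) = - boxSign ε := by
  unfold boxSign
  set S := Finset.univ.filter (fun ℓ => ε ℓ = false) with hS
  cases h : ε j
  · have hjS : j ∈ S := by simp [hS, h]
    have hset : Finset.univ.filter (fun ℓ => flipAt j ε ℓ = false) = S.erase j := by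
      ext l
      by_cases hl : l = j
      · subst hl; simp [flipAt_apply_self, h]
      · simp [flipAt_apply_ne j _ hl, hS, hl]
    rw [hset]
    have hcard : S.card = (S.erase j).card + 1 := (Finset.card_erase_add_one hjS).symm
    rw [hcard, pow_succ]; ring
  · have hjS : j ∉ S := by simp [hS, h]
    have hset : Finset.univ.filter (fun ℓ => flipAt j ε ℓ = false) = insert j S := by
      ext l
      by_cases hl : l = j
      · subst hl; simp [flipAt_apply_self, h]
      · simp [flipAt_apply_ne j _ hl, hS, hl]
    rw [hset, Finset.card_insert_of_notMem hjS, pow_succ]; ring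

lemma sum_boxSign_flip_zero (j : Fin L) (t : (Fin L → Bool) → ℝ)
    (ht : ∀ ε, t (flipAt j ε) = t ε) :
    ∑ ε : Fin L → Bool, boxSign ε * t ε = 0 := by
  have h1 : ∑ ε : Fin L → Bool, boxSign (flipAt j ε) * t (flipAt j ε)
      = ∑ ε : Fin L → Bool, boxSign ε * t ε :=
    Fintype.sum_bijective (flipAt j) (flipAt_invol j).bijective _ _ (fun ε => rfl)
  have h2 : ∑ ε : Fin L → Bool, boxSign (flipAt j ε) * t (flipAt j ε)
      = - ∑ ε : Fin L → Bool, boxSign ε * t ε := by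
    rw [← Finset.sum_neg_distrib]
    exact Finset.sum_congr rfl fun ε _ => by rw [boxSign_flipAt, ht]; ring
  linarith

lemma vol_eq_zero (D : (Fin L → ℝ) → ℝ) (x y : Fin L → ℝ) (j : Fin L) (hxy : x j = y j) :
    ∑ ε : Fin L → Bool, boxSign ε * D (fun ℓ => if ε ℓ then y ℓ else x ℓ) = 0 := by
  apply sum_boxSign_flip_zero j
  intro ε
  congr 1
  funext l
  by_cases hl : l = j
  · subst hl; rw [flipAt_apply_self]; cases h : ε l <;> simp [h, hxy]
  · rw [flipAt_apply_ne j _ hl]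

lemma vol_add (D : (Fin L → ℝ) → ℝ) (x y : Fin L → ℝ) (j : Fin L) (c : ℝ) :
    ∑ ε : Fin L → Bool, boxSign ε * D (fun ℓ => if ε ℓ then y ℓ else x ℓ)
      = (∑ ε : Fin L → Bool, boxSign ε * D (fun ℓ => if ε ℓ then Function.update y j c ℓ else x ℓ))
      + ∑ ε : Fin L → Bool, boxSign ε * D (fun ℓ => if ε ℓ then y ℓ else Function.update x j c ℓ) := by
  set t : (Fin L → Bool) → ℝ := fun ε =>
    D (fun ℓ => if ε ℓ then y ℓ else x ℓ)
    - D (fun ℓ => if ε ℓ then Function.update y j c ℓ else x ℓ)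
    - D (fun ℓ => if ε ℓ then y ℓ else Function.update x j c ℓ) with ht0
  have hval : ∀ ε, t ε = - D (fun ℓ => if ℓ = j then c else if ε ℓ then y ℓ else x ℓ) := by
    intro ε
    cases h : ε j
    · have e1 : (fun ℓ => if ε ℓ then Function.update y j c ℓ else x ℓ)
          = (fun ℓ => if ε ℓ then y ℓ else x ℓ) := by
        funext l
        by_cases hl : l = j
        · subst hl; simp [h]
        · simp [Function.update_of_ne hl]
      have e2 : (fun ℓ => if ε ℓ then y ℓ else Function.update x j c ℓ)
          = (fun ℓ => if ℓ = j then c else if ε ℓ then y ℓ else x ℓ) := by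
        funext l
        by_cases hl : l = j
        · subst hl; simp [h]
        · simp [Function.update_of_ne hl, hl]
      simp only [ht0, e1, e2]; ring
    · have e1 : (fun ℓ => if ε ℓ then Function.update y j c ℓ else x ℓ)
          = (fun ℓ => if ℓ = j then c else if ε ℓ then y ℓ else x ℓ) := by
        funext l
        by_cases hl : l = j
        · subst hl; simp [h]
        · simp [Function.update_of_ne hl, hl]
      have e2 : (fun ℓ => if ε ℓ then y ℓ else Function.update x j c ℓ)
          = (fun ℓ => if ε ℓ then y ℓ else x ℓ) := by
        funext l
        by_cases hl : l = j
        · subst hl; simp [h]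
        · simp [Function.update_of_ne hl]
      simp only [ht0, e1, e2]; ring
  have ht : ∀ ε, t (flipAt j ε) = t ε := by
    intro ε
    rw [hval, hval]
    congr 2
    funext l
    by_cases hl : l = j
    · simp [hl]
    · simp [hl, flipAt_apply_ne j _ hl]
  have key := sum_boxSign_flip_zero j t ht
  simp only [ht0, mul_sub] at key
  rw [Finset.sum_sub_distrib, Finset.sum_sub_distrib] at key
  linarith

end aux

lemma vol_nonneg (M L : ℕ) (D : (Fin L → ℝ) → ℝ) (hD : IsDiscreteCopulaR M L D) :
    ∀ n : ℕ, ∀ a b : Fin L → ℕ, (∀ ℓ, a ℓ ≤ b ℓ) → (∀ ℓ, b ℓ ≤ M) →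
      (∑ ℓ, (b ℓ - a ℓ)) = n →
      0 ≤ ∑ ε : Fin L → Bool,
          boxSign ε * D (fun ℓ => if ε ℓ then (b ℓ : ℝ) / M else (a ℓ : ℝ) / M) := by
  intro n
  induction n using Nat.strong_induction_on with
  | _ n ih =>
    intro a b hab hbM hsum
    by_cases hdeg : ∃ j, a j = b j
    · obtain ⟨j, hj⟩ := hdeg
      have h0 := vol_eq_zero D (fun ℓ => (a ℓ : ℝ) / M) (fun ℓ => (b ℓ : ℝ) / M) j
        (by simp [hj])
      linarith
    · push_neg at hdeg
      have hlt : ∀ ℓ, a ℓ < b ℓ := fun ℓ => lt_of_le_of_ne (hab ℓ) (hdeg ℓ)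
      by_cases hunit : ∀ ℓ, b ℓ = a ℓ + 1
      · have h3 := hD.2.2.2 b (fun ℓ => ⟨by have := hlt ℓ; omega, hbM ℓ⟩)
        refine le_of_le_of_eq h3 (Finset.sum_congr rfl fun ε _ => ?_)
        have harg : (fun ℓ => if ε ℓ then (b ℓ : ℝ) / M else ((b ℓ - 1 : ℕ) : ℝ) / M)
            = fun ℓ => if ε ℓ then (b ℓ : ℝ) / M else (a ℓ : ℝ) / M := by
          funext l
          have hbl : b l - 1 = a l := by have := hunit l; omega
          rw [hbl]
        rw [harg]
      · push_neg at hunit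
        obtain ⟨j, hj⟩ := hunit
        have hj2 : a j + 1 < b j := by have := hlt j; omega
        set c : ℝ := ((a j + 1 : ℕ) : ℝ) / M with hc
        have hy' : Function.update (fun ℓ => (b ℓ : ℝ) / M) j c
            = (fun ℓ => ((Function.update b j (a j + 1)) ℓ : ℝ) / M) := by
          funext l
          by_cases hl : l = j
          · subst hl; simp [hc]
          · simp [Function.update_of_ne hl]
        have hx' : Function.update (fun ℓ => (a ℓ : ℝ) / M) j c
            = (fun ℓ => ((Function.update a j (a j + 1)) ℓ : ℝ) / M) := by
          funext l
          by_cases hl : l = j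
          · subst hl; simp [hc]
          · simp [Function.update_of_ne hl]
        have hadd := vol_add D (fun ℓ => (a ℓ : ℝ) / M) (fun ℓ => (b ℓ : ℝ) / M) j c
        rw [hy', hx'] at hadd
        have h1 : 0 ≤ ∑ ε : Fin L → Bool,
            boxSign ε * D (fun ℓ => if ε ℓ then ((Function.update b j (a j + 1)) ℓ : ℝ) / M
              else (a ℓ : ℝ) / M) := by
          refine ih (∑ ℓ, (Function.update b j (a j + 1) ℓ - a ℓ)) ?_ a _ ?_ ?_ rfl
          · rw [← hsum]
            refine Finset.sum_lt_sum (fun l _ => ?_) ⟨j, Finset.mem_univ j, ?_⟩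
            · by_cases hl : l = j
              · subst hl; simp; omega
              · simp [Function.update_of_ne hl]
            · simp; omega
          · intro l
            by_cases hl : l = j
            · subst hl; simp
            · simp [Function.update_of_ne hl, hab l]
          · intro l
            by_cases hl : l = j
            · subst hl; simp; have := hbM l; omega
            · simp [Function.update_of_ne hl, hbM l]
        have h2 : 0 ≤ ∑ ε : Fin L → Bool,
            boxSign ε * D (fun ℓ => if ε ℓ then (b ℓ : ℝ) / M
              else ((Function.update a j (a j + 1)) ℓ : ℝ) / M) := by
          refine ih (∑ ℓ, (b ℓ - Function.update a j (a j + 1) ℓ)) ?_ _ b ?_ hbM rfl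
          · rw [← hsum]
            refine Finset.sum_lt_sum (fun l _ => ?_) ⟨j, Finset.mem_univ j, ?_⟩
            · by_cases hl : l = j
              · subst hl; simp; omega
              · simp [Function.update_of_ne hl]
            · simp; omega
          · intro l
            by_cases hl : l = j
            · subst hl; simp; omega
            · simp [Function.update_of_ne hl, hab l]
        rw [hadd]
        exact add_nonneg h1 h2




/-- discrete Sklar, part 1: if `F₁,…,F_L` are univariate CDFs with range
in `I_M` and `D` is a discrete copula on `I_M^L`, then
`H(y₁,…,y_L) = D(F₁(y₁),…,F_L(y_L))` is an `L`-dimensional CDF with values in `[0,1]`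
whose `ℓ`-th marginal is `F_ℓ`. -/
theorem discrete_sklar_part1 (M L : ℕ) (hM : 0 < M) (hL : 2 ≤ L)
    (D : (Fin L → ℝ) → ℝ) (hD : IsDiscreteCopulaR M L D)
    (F : Fin L → EReal → ℝ) (hF : ∀ ℓ, IsCDF (F ℓ))
    (hRan : ∀ ℓ : Fin L, ∀ y : EReal, ∃ k ≤ M, F ℓ y = (k : ℝ) / M) :
    IsMvCDF L (fun y => D (fun ℓ => F ℓ (y ℓ))) ∧
    (∀ y : Fin L → EReal, D (fun ℓ => F ℓ (y ℓ)) ∈ Set.Icc (0 : ℝ) 1) ∧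
    (∀ ℓ : Fin L, ∀ y : EReal,
      D (fun l => F l (if l = ℓ then y else ⊤)) = F ℓ y) := by
  obtain ⟨hD1, hD2, hD3, hD4⟩ := hD
  have hMpos : (0 : ℝ) < M := by exact_mod_cast hM
  have hmarg : ∀ ℓ : Fin L, ∀ y : EReal,
      D (fun l => F l (if l = ℓ then y else ⊤)) = F ℓ y := by
    intro ℓ y
    obtain ⟨k, hk, hFk⟩ := hRan ℓ y
    have harg : (fun l => F l (if l = ℓ then y else ⊤))
        = fun l => if l = ℓ then (k : ℝ) / M else 1 := by
      funext l
      by_cases hl : l = ℓ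
      · subst hl; simp [hFk]
      · simp [hl, (hF l).2.2.2]
    rw [harg, hD3 ℓ k hk, hFk]
  refine ⟨⟨?_, ?_, ?_⟩, ?_, hmarg⟩
  · rintro y ⟨j, hj⟩
    show D (fun ℓ => F ℓ (y ℓ)) = 0
    choose k hk hFk using fun ℓ => hRan ℓ (y ℓ)
    have harg : (fun ℓ => F ℓ (y ℓ)) = fun ℓ => (k ℓ : ℝ) / M := funext hFk
    rw [harg]
    apply hD2 k hk
    refine ⟨j, ?_⟩
    have h0 : (k j : ℝ) / M = 0 := by rw [← hFk j, hj, (hF j).2.2.1]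
    have h1 : (k j : ℝ) = 0 := by
      rcases div_eq_zero_iff.mp h0 with h | h
      · exact h
      · exact absurd h (ne_of_gt hMpos)
    exact_mod_cast h1
  · show D (fun ℓ => F ℓ ⊤) = 1
    have hj : (0 : ℕ) < L := by omega
    have hmt := hmarg ⟨0, hj⟩ ⊤
    simp only [ite_self] at hmt
    rw [(hF ⟨0, hj⟩).2.2.2] at hmt
    exact hmt
  · intro y z hyz
    choose a ha hFa using fun ℓ => hRan ℓ (y ℓ)
    choose b hb hFb using fun ℓ => hRan ℓ (z ℓ)
    have hab : ∀ ℓ, a ℓ ≤ b ℓ := by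
      intro ℓ
      have hle : F ℓ (y ℓ) ≤ F ℓ (z ℓ) := (hF ℓ).1 (hyz ℓ)
      rw [hFa, hFb, div_le_div_iff₀ hMpos hMpos] at hle
      have h2 : a ℓ * M ≤ b ℓ * M := by exact_mod_cast hle
      exact Nat.le_of_mul_le_mul_right h2 hM
    have key := vol_nonneg M L D ⟨hD1, hD2, hD3, hD4⟩ _ a b hab hb rfl
    refine le_of_le_of_eq key (Finset.sum_congr rfl fun ε _ => ?_)
    show boxSign ε * D (fun ℓ => if ε ℓ then (b ℓ : ℝ) / M else (a ℓ : ℝ) / M)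
        = boxSign ε * D (fun ℓ => F ℓ (if ε ℓ then z ℓ else y ℓ))
    have harg : (fun ℓ => if ε ℓ then (b ℓ : ℝ) / M else (a ℓ : ℝ) / M)
        = fun ℓ => F ℓ (if ε ℓ then z ℓ else y ℓ) := by
      funext l
      cases h : ε l <;> simp [h, hFa, hFb]
    rw [harg]
  · intro y
    show D (fun ℓ => F ℓ (y ℓ)) ∈ Set.Icc (0 : ℝ) 1
    choose k hk hFk using fun ℓ => hRan ℓ (y ℓ)
    have harg : (fun ℓ => F ℓ (y ℓ)) = fun ℓ => (k ℓ : ℝ) / M := funext hFk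
    rw [harg]
    exact hD1 k hk
end

section
/- Well-definedness step in discrete Sklar: if H is an L-dimensional CDF with marginals F₁,…,F_L and y₁,…,y_L, z₁,…,z_L ∈ ℝ̄ satisfy F_ℓ(y_ℓ) = F_ℓ(z_ℓ) for all ℓ, then H(y₁,…,y_L) = H(z₁,…,z_L). -/
open Finset

lemma box_one {L : ℕ} {H : (Fin L → EReal) → ℝ} (hH : IsMvCDF L H)
    (ℓ : Fin L) (x : Fin L → EReal) {t s : EReal} (hts : t ≤ s) :
    H (fun j => if j = ℓ then t else x j) ≤ H (fun j => if j = ℓ then s else x j) := by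
  have hle : ∀ j, (if j = ℓ then t else (⊥ : EReal)) ≤ (if j = ℓ then s else x j) := by
    intro j; by_cases hj : j = ℓ <;> simp [hj, hts]
  have h0 := hH.2.2 _ _ hle
  set e1 : Fin L → Bool := fun _ => true with he1
  set e0 : Fin L → Bool := fun j => decide (j ≠ ℓ) with he0
  have hne : e1 ≠ e0 := by
    intro hc; have := congrFun hc ℓ; simp [he1, he0] at this
  have hzero : ∀ ε ∈ (univ : Finset (Fin L → Bool)),
      ε ∉ ({e1, e0} : Finset (Fin L → Bool)) →
      boxSign ε * H (fun j => if ε j then (if j = ℓ then s else x j)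
        else (if j = ℓ then t else (⊥:EReal))) = 0 := by
    intro ε _ hε
    have hk : ∃ k, k ≠ ℓ ∧ ε k = false := by
      by_contra hc
      push_neg at hc
      apply hε
      simp only [Finset.mem_insert, Finset.mem_singleton]
      cases hb : ε ℓ
      · right; funext j; by_cases hj : j = ℓ
        · simp [he0, hj, hb]
        · simpa [he0, hj] using hc j hj
      · left; funext j; by_cases hj : j = ℓ
        · simp [he1, hj, hb]
        · simpa [he1, hj] using hc j hj
    obtain ⟨k, hk1, hk2⟩ := hk
    have hz : H (fun j => if ε j then (if j = ℓ then s else x j)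
        else (if j = ℓ then t else (⊥:EReal))) = 0 :=
      hH.1 _ ⟨k, by simp [hk2, hk1]⟩
    rw [hz, mul_zero]
  rw [← Finset.sum_subset (Finset.subset_univ {e1, e0}) hzero,
    Finset.sum_pair hne] at h0
  have hs1 : boxSign e1 = 1 := by simp [boxSign, he1]
  have hs0 : boxSign e0 = -1 := by
    have hf : (univ.filter (fun j => e0 j = false)) = {ℓ} := by
      ext j; simp [he0]
    simp [boxSign, hf]
  have hv1 : (fun j => if e1 j then (if j = ℓ then s else x j)
      else (if j = ℓ then t else (⊥:EReal))) = (fun j => if j = ℓ then s else x j) := by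
    funext j; simp [he1]
  have hv0 : (fun j => if e0 j then (if j = ℓ then s else x j)
      else (if j = ℓ then t else (⊥:EReal))) = (fun j => if j = ℓ then t else x j) := by
    funext j; by_cases hj : j = ℓ <;> simp [he0, hj]
  rw [hs1, hs0, hv1, hv0] at h0
  linarith

lemma box_two {L : ℕ} {H : (Fin L → EReal) → ℝ} (hH : IsMvCDF L H)
    {ℓ k : Fin L} (hkl : k ≠ ℓ) (c : Fin L → EReal)
    {t s a b : EReal} (hts : t ≤ s) (hab : a ≤ b) :
    H (fun j => if j = ℓ then s else if j = k then a else c j)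
      - H (fun j => if j = ℓ then t else if j = k then a else c j)
    ≤ H (fun j => if j = ℓ then s else if j = k then b else c j)
      - H (fun j => if j = ℓ then t else if j = k then b else c j) := by
  set y' : Fin L → EReal := fun j => if j = ℓ then t else if j = k then a else ⊥ with hy'
  set z' : Fin L → EReal := fun j => if j = ℓ then s else if j = k then b else c j with hz'
  have hle : ∀ j, y' j ≤ z' j := by
    intro j; by_cases hj : j = ℓ
    · simp [hy', hz', hj, hts]
    · by_cases hjk : j = k <;> simp [hy', hz', hj, hjk, hkl, hab]
  have h0 := hH.2.2 _ _ hle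
  set e11 : Fin L → Bool := fun _ => true with he11
  set e01 : Fin L → Bool := fun j => decide (j ≠ ℓ) with he01
  set e10 : Fin L → Bool := fun j => decide (j ≠ k) with he10
  set e00 : Fin L → Bool := fun j => decide (j ≠ ℓ) && decide (j ≠ k) with he00
  have d1 : e11 ≠ e01 := by intro hc; have := congrFun hc ℓ; simp [he11, he01] at this
  have d2 : e11 ≠ e10 := by intro hc; have := congrFun hc k; simp [he11, he10] at this
  have d3 : e11 ≠ e00 := by intro hc; have := congrFun hc ℓ; simp [he11, he00] at this
  have d4 : e01 ≠ e10 := by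
    intro hc; have := congrFun hc ℓ; simp [he01, he10, Ne.symm hkl] at this
  have d5 : e01 ≠ e00 := by
    intro hc; have := congrFun hc k; simp [he01, he00, hkl] at this
  have d6 : e10 ≠ e00 := by
    intro hc; have := congrFun hc ℓ; simp [he01, he10, he00, Ne.symm hkl] at this
  have hzero : ∀ ε ∈ (univ : Finset (Fin L → Bool)),
      ε ∉ ({e11, e01, e10, e00} : Finset (Fin L → Bool)) →
      boxSign ε * H (fun j => if ε j then z' j else y' j) = 0 := by
    intro ε _ hε
    have hm : ∃ m, m ≠ ℓ ∧ m ≠ k ∧ ε m = false := by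
      by_contra hc
      push_neg at hc
      apply hε
      simp only [Finset.mem_insert, Finset.mem_singleton]
      have hv : ∀ j, j ≠ ℓ → j ≠ k → ε j = true := by
        intro j h1 h2
        have := hc j h1 h2
        simpa using this
      cases hbl : ε ℓ <;> cases hbk : ε k
      · right; right; right
        funext j
        by_cases h1 : j = ℓ
        · simp [he00, h1, hbl, Ne.symm hkl]
        · by_cases h2 : j = k
          · simp [he00, h2, hbk, hkl]
          · simp [he00, h1, h2, hv j h1 h2]
      · right; left
        funext j
        by_cases h1 : j = ℓ
        · simp [he01, h1, hbl]
        · by_cases h2 : j = k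
          · simp [he01, h2, hbk, hkl]
          · simp [he01, h1, hv j h1 h2]
      · right; right; left
        funext j
        by_cases h2 : j = k
        · simp [he10, h2, hbk]
        · by_cases h1 : j = ℓ
          · simp [he10, h1, hbl, Ne.symm hkl]
          · simp [he10, h2, hv j h1 h2]
      · left
        funext j
        by_cases h1 : j = ℓ
        · simp [he11, h1, hbl]
        · by_cases h2 : j = k
          · simp [he11, h2, hbk]
          · simp [he11, hv j h1 h2]
    obtain ⟨m, hm1, hm2, hm3⟩ := hm
    have hz : H (fun j => if ε j then z' j else y' j) = 0 :=
      hH.1 _ ⟨m, by simp [hm3, hy', hm1, hm2]⟩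
    rw [hz, mul_zero]
  have hsum : ∑ ε : Fin L → Bool, boxSign ε * H (fun j => if ε j then z' j else y' j)
      = ∑ ε ∈ ({e11, e01, e10, e00} : Finset (Fin L → Bool)),
          boxSign ε * H (fun j => if ε j then z' j else y' j) :=
    (Finset.sum_subset (Finset.subset_univ _) hzero).symm
  rw [hsum] at h0
  rw [Finset.sum_insert (by simp [d1, d2, d3]),
      Finset.sum_insert (by simp [d4, d5]),
      Finset.sum_insert (by simp [d6]),
      Finset.sum_singleton] at h0
  have hs11 : boxSign e11 = 1 := by simp [boxSign, he11]
  have hs01 : boxSign e01 = -1 := by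
    have hf : (univ.filter (fun j => e01 j = false)) = {ℓ} := by ext j; simp [he01]
    simp [boxSign, hf]
  have hs10 : boxSign e10 = -1 := by
    have hf : (univ.filter (fun j => e10 j = false)) = {k} := by ext j; simp [he10]
    simp [boxSign, hf]
  have hs00 : boxSign e00 = 1 := by
    have hf : (univ.filter (fun j => e00 j = false)) = {ℓ, k} := by
      ext j; simp [he00]; tauto
    rw [boxSign, hf, Finset.card_insert_of_notMem (by simp [Ne.symm hkl]),
      Finset.card_singleton]
    norm_num
  have hv11 : (fun j => if e11 j then z' j else y' j)
      = (fun j => if j = ℓ then s else if j = k then b else c j) := by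
    funext j; simp [he11, hz']
  have hv01 : (fun j => if e01 j then z' j else y' j)
      = (fun j => if j = ℓ then t else if j = k then b else c j) := by
    funext j
    by_cases h1 : j = ℓ
    · simp [he01, h1, hy']
    · simp [he01, h1, hz']
  have hv10 : (fun j => if e10 j then z' j else y' j)
      = (fun j => if j = ℓ then s else if j = k then a else c j) := by
    funext j
    by_cases h2 : j = k
    · simp [he10, h2, hy', hz', hkl]
    · simp [he10, h2, hz']
  have hv00 : (fun j => if e00 j then z' j else y' j)
      = (fun j => if j = ℓ then t else if j = k then a else c j) := by
    funext j
    by_cases h1 : j = ℓ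
    · simp [he00, h1, hy']
    · by_cases h2 : j = k
      · simp [he00, h1, h2, hy', hkl]
      · simp [he00, h1, h2, hz']
  rw [hs11, hs01, hs10, hs00, hv11, hv01, hv10, hv00] at h0
  linarith

lemma marg_bound {L : ℕ} {H : (Fin L → EReal) → ℝ} (hH : IsMvCDF L H)
    (ℓ : Fin L) (x : Fin L → EReal) {t s : EReal} (hts : t ≤ s) :
    H (fun j => if j = ℓ then s else x j) - H (fun j => if j = ℓ then t else x j)
    ≤ H (fun j => if j = ℓ then s else ⊤) - H (fun j => if j = ℓ then t else ⊤) := by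
  have key : ∀ S : Finset (Fin L), ℓ ∉ S →
      H (fun j => if j = ℓ then s else x j) - H (fun j => if j = ℓ then t else x j)
      ≤ H (fun j => if j = ℓ then s else if j ∈ S then ⊤ else x j)
        - H (fun j => if j = ℓ then t else if j ∈ S then ⊤ else x j) := by
    intro S
    induction S using Finset.induction_on with
    | empty => intro _; simp
    | @insert k S hk ih =>
      intro hli
      have hlS : ℓ ∉ S := fun hc => hli (Finset.mem_insert_of_mem hc)
      have hkl : k ≠ ℓ := fun hc => hli (by simp [hc])
      refine (ih hlS).trans ?_
      have e1 : ∀ u : EReal, (fun j => if j = ℓ then u else if j ∈ S then ⊤ else x j)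
          = (fun j => if j = ℓ then u else if j = k then x k
              else if j ∈ S then ⊤ else x j) := by
        intro u; funext j
        by_cases h1 : j = ℓ
        · simp [h1]
        · by_cases h2 : j = k
          · simp [h1, h2, hk]
          · simp [h1, h2]
      have e2 : ∀ u : EReal, (fun j => if j = ℓ then u else if j ∈ insert k S then ⊤ else x j)
          = (fun j => if j = ℓ then u else if j = k then ⊤
              else if j ∈ S then ⊤ else x j) := by
        intro u; funext j
        by_cases h1 : j = ℓ
        · simp [h1]
        · by_cases h2 : j = k
          · simp [h1, h2]
          · simp [h1, h2, Finset.mem_insert]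
      rw [e1 s, e1 t, e2 s, e2 t]
      exact box_two hH hkl _ hts le_top
  have h := key (univ.erase ℓ) (by simp)
  have e3 : ∀ u : EReal, (fun j => if j = ℓ then u else if j ∈ univ.erase ℓ then ⊤ else x j)
      = (fun j => if j = ℓ then u else ⊤) := by
    intro u; funext j
    by_cases h1 : j = ℓ <;> simp [h1]
  rwa [e3 s, e3 t] at h

lemma coord_step {L : ℕ} {H : (Fin L → EReal) → ℝ} (hH : IsMvCDF L H)
    (ℓ : Fin L) (x : Fin L → EReal) {u v : EReal}
    (hm : H (fun l => if l = ℓ then u else ⊤) = H (fun l => if l = ℓ then v else ⊤)) :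
    H (fun j => if j = ℓ then u else x j) = H (fun j => if j = ℓ then v else x j) := by
  rcases le_total u v with huv | huv
  · refine le_antisymm (box_one hH ℓ x huv) ?_
    have := marg_bound hH ℓ x huv
    rw [hm] at this
    linarith
  · refine le_antisymm ?_ (box_one hH ℓ x huv)
    have := marg_bound hH ℓ x huv
    rw [hm] at this
    linarith

/-- well-definedness step: if `H` is an `L`-dimensional CDF and the points
`y, z ∈ ℝ̄^L` have equal marginal values `F_ℓ(y_ℓ) = F_ℓ(z_ℓ)` for all `ℓ`, then
`H(y) = H(z)`. -/
theorem sklar_well_defined (L : ℕ) (hL : 2 ≤ L)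
    (H : (Fin L → EReal) → ℝ) (hH : IsMvCDF L H)
    (y z : Fin L → EReal)
    (h : ∀ ℓ : Fin L,
      H (fun l => if l = ℓ then y ℓ else ⊤) = H (fun l => if l = ℓ then z ℓ else ⊤)) :
    H y = H z := by
  have key : ∀ m : ℕ, m ≤ L → H y = H (fun j => if (j : ℕ) < m then z j else y j) := by
    intro m
    induction m with
    | zero => intro _; simp
    | succ m ih =>
      intro hm
      have hmL : m < L := hm
      rw [ih (le_of_lt hmL)]
      set ℓ : Fin L := ⟨m, hmL⟩ with hℓ
      have e1 : (fun j : Fin L => if (j : ℕ) < m then z j else y j)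
          = (fun j => if j = ℓ then y ℓ else if (j : ℕ) < m then z j else y j) := by
        funext j
        by_cases h1 : j = ℓ
        · simp [h1, hℓ]
        · simp [h1]
      have e2 : (fun j : Fin L => if (j : ℕ) < m + 1 then z j else y j)
          = (fun j => if j = ℓ then z ℓ else if (j : ℕ) < m then z j else y j) := by
        funext j
        by_cases h1 : j = ℓ
        · simp [h1, hℓ]
        · have hne : (j : ℕ) ≠ m := by
            intro hc
            exact h1 (Fin.ext hc)
          have : (j : ℕ) < m + 1 ↔ (j : ℕ) < m := by omega
          simp [h1, this]
      rw [e1, e2]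
      exact coord_step hH ℓ _ (h ℓ)
  have hz := key L le_rfl
  have : (fun j : Fin L => if (j : ℕ) < L then z j else y j) = z := by
    funext j; simp [j.isLt]
  rwa [this] at hz
end
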